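/- arXiv:2311.10789 — 5 statements merged into one kernel-verified Lean document; each statement's English description precedes it below -/
import Mathlib

section
/- For a nonnegative vector w ∈ ℝ_{>0}^r and a nonnegative matrix H ∈ ℝ_{≥0}^{r×n}, the diagonal matrix K with entries K_{aa} = (w H H^T)_a / w_a satisfies: K − H H^T is positive semi-definite. -/
/-!
Conjugating by `W = diagonal w` turns `K - H Hᵀ` into the Laplacian `diagonal (row sums of B) - B`
of the nonnegative symmetric matrix `B = W H Hᵀ W`: the row sums match because `w A = A w` for
symmetric `A`. The quadratic form of such a Laplacian is `½ ∑ B_ab (x_a - x_b)² ≥ 0`.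
-/

open Matrix Finset

theorem Matrix.posSemidef_diagonal_sum_sub {ι : Type*} [Fintype ι] [DecidableEq ι]
    {B : Matrix ι ι ℝ} (hB : B.IsSymm) (hB₀ : ∀ i j, 0 ≤ B i j) :
    (diagonal (fun i => ∑ j, B i j) - B).PosSemidef := by
  refine .of_dotProduct_mulVec_nonneg ?_ fun x => ?_
  · exact (isHermitian_diagonal _).sub (isHermitian_iff_isSymm.mpr hB)
  have hexpand : star x ⬝ᵥ ((diagonal (fun i => ∑ j, B i j) - B) *ᵥ x)
      = ∑ i, ∑ j, B i j * x i ^ 2 - ∑ i, ∑ j, B i j * x i * x j := by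
    rw [star_trivial, sub_mulVec, dotProduct_sub]
    congr 1
    · simp only [dotProduct, mulVec_diagonal, sum_mul, mul_sum]
      exact sum_congr rfl fun i _ => sum_congr rfl fun j _ => by ring
    · simp only [dotProduct, mulVec, mul_sum]
      exact sum_congr rfl fun i _ => sum_congr rfl fun j _ => by ring
  have hswap : ∑ i, ∑ j, B i j * x j ^ 2 = ∑ i, ∑ j, B i j * x i ^ 2 := by
    rw [sum_comm]
    exact sum_congr rfl fun i _ => sum_congr rfl fun j _ => by rw [hB.apply]
  have hsos : ∑ i, ∑ j, B i j * (x i - x j) ^ 2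
      = ∑ i, ∑ j, B i j * x i ^ 2 + ∑ i, ∑ j, B i j * x j ^ 2
        - 2 * ∑ i, ∑ j, B i j * x i * x j := by
    simp only [mul_sum, ← sum_add_distrib, ← sum_sub_distrib]
    exact sum_congr rfl fun i _ => sum_congr rfl fun j _ => by ring
  have hnonneg : 0 ≤ ∑ i, ∑ j, B i j * (x i - x j) ^ 2 :=
    sum_nonneg fun i _ => sum_nonneg fun j _ => mul_nonneg (hB₀ i j) (sq_nonneg _)
  rw [hsos, hswap] at hnonneg
  linarith

theorem Matrix.posSemidef_diagonal_vecMul_div_sub {ι : Type*} [Fintype ι] [DecidableEq ι]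
    {A : Matrix ι ι ℝ} (hA : A.IsSymm) (hA₀ : ∀ i j, 0 ≤ A i j) {w : ι → ℝ}
    (hw : ∀ i, 0 < w i) :
    (diagonal (fun i => (w ᵥ* A) i / w i) - A).PosSemidef := by
  have hL := posSemidef_diagonal_sum_sub (B := diagonal w * A * diagonal w)
    (by simp [IsSymm, transpose_mul, hA.eq, mul_assoc])
    (fun i j => by simpa using mul_nonneg (mul_nonneg (hw i).le (hA₀ i j)) (hw j).le)
  convert hL.mul_mul_conjTranspose_same (diagonal w⁻¹) using 1
  ext i j
  have hwi := (hw i).ne'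
  by_cases hij : i = j
  · subst hij
    simp only [vecMul, dotProduct, hA.apply, sub_apply, diagonal_apply_eq, mul_diagonal,
      diagonal_mul, mul_assoc, mul_comm (A _ _), ← mul_sum,
      conjTranspose_eq_transpose_of_trivial, diagonal_transpose, Pi.inv_apply]
    field_simp
  · have hwj := (hw j).ne'
    simp only [sub_apply, diagonal_apply_ne _ hij, zero_sub, mul_diagonal, diagonal_mul,
      conjTranspose_eq_transpose_of_trivial, diagonal_transpose, Pi.inv_apply]
    field_simp

/-- For `w` strictly positive and `H` nonnegative, the diagonal matrix `K` with
`K_{aa} = (w H Hᵀ)_a / w_a` satisfies `K - H Hᵀ` positive semi-definite. -/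
theorem stmt_1 {r n : ℕ} (w : Fin r → ℝ) (hw : ∀ a, 0 < w a)
    (H : Matrix (Fin r) (Fin n) ℝ) (hH : ∀ i j, 0 ≤ H i j) :
    (Matrix.diagonal (fun a => (w ᵥ* (H * Hᵀ)) a / w a) - H * Hᵀ).PosSemidef := by
  have hsymm : (H * Hᵀ).IsSymm := by rw [IsSymm, transpose_mul, transpose_transpose]
  have hnonneg : ∀ a b, 0 ≤ (H * Hᵀ) a b := fun a b => by
    rw [mul_apply]
    exact sum_nonneg fun k _ => mul_nonneg (hH a k) (hH b k)
  exact posSemidef_diagonal_vecMul_div_sub hsymm hnonneg hw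
end

section
/- Let F(w) = (1/2) Σ_c (a_c − v_c − Σ_j w_j H_{jc})², a quadratic in w ∈ ℝ^r. Let w^t ∈ ℝ^r have strictly positive entries, and let K be the diagonal matrix with K_{aa} = ((w^t H H^T)_a + (v^T H^T)_a)/w^t_a, where v, a have nonnegative entries and H has nonnegative entries. Then G(w, w^t) = F(w^t) + (w − w^t)·∇F(w^t) + (1/2)(w − w^t)^T K (w − w^t) satisfies G(w, w^t) ≥ F(w) for all w and G(w^t, w^t) = F(w^t), i.e., G is an auxiliary function for F. -/
/-!
`F` is quadratic with Hessian `H Hᵀ`, so with `d = w - wᵗ` its Taylor expansion at `wᵗ` is exact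
and `G(w, wᵗ) - F(w) = ½ dᵀ (K - H Hᵀ) d`. The diagonal of `K` splits into `(wᵗᵀ H Hᵀ)_b / wᵗ_b`
and the nonnegative `(vᵀ Hᵀ)_b / wᵗ_b`; the first part dominates `H Hᵀ` by the Lee–Seung estimate,
valid for any symmetric matrix with nonnegative entries and any positive vector.
-/

open Matrix

/-- `F(w) = (1/2) Σ_c (a_c - v_c - Σ_j w_j H_{jc})²`. -/
noncomputable def F3 {r n : ℕ} (a v : Fin n → ℝ) (H : Matrix (Fin r) (Fin n) ℝ)
    (w : Fin r → ℝ) : ℝ :=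
  (1 / 2) * ∑ c, (a c - v c - ∑ j, w j * H j c) ^ 2

/-- The gradient of `F3`: `(∇F(w))_b = -Σ_c (a_c - v_c - Σ_j w_j H_{jc}) H_{bc}`. -/
noncomputable def gradF3 {r n : ℕ} (a v : Fin n → ℝ) (H : Matrix (Fin r) (Fin n) ℝ)
    (w : Fin r → ℝ) (b : Fin r) : ℝ :=
  -∑ c, (a c - v c - ∑ j, w j * H j c) * H b c

theorem dotProduct_mulVec_le_sum_vecMul_div {ι : Type*} [Fintype ι] (M : Matrix ι ι ℝ)
    (hM : M.IsSymm) (hM₀ : ∀ i j, 0 ≤ M i j) (u : ι → ℝ) (hu : ∀ i, 0 < u i) (d : ι → ℝ) :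
    d ⬝ᵥ (M *ᵥ d) ≤ ∑ i, (u ᵥ* M) i / u i * d i ^ 2 := by
  -- With `x = d / u`, the gap is `(1/2) Σ_{i,j} M_ij u_i u_j (x_i - x_j)²`.
  have hterm : ∀ i j, M i j * u i * u j * (d i / u i - d j / u j) ^ 2 =
      u j * M j i / u i * d i ^ 2 + u i * M i j / u j * d j ^ 2 - 2 * (d i * (M i j * d j)) := by
    intro i j
    have hi := (hu i).ne'
    have hj := (hu j).ne'
    rw [hM.apply i j]
    field_simp
    ring
  have hdiag : ∀ i, (u ᵥ* M) i / u i * d i ^ 2 = ∑ j, u j * M j i / u i * d i ^ 2 := by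
    intro i
    simp only [vecMul, dotProduct, Finset.sum_div, Finset.sum_mul]
  have hgap : 0 ≤ ∑ i, ∑ j, M i j * u i * u j * (d i / u i - d j / u j) ^ 2 :=
    Finset.sum_nonneg fun i _ => Finset.sum_nonneg fun j _ =>
      mul_nonneg (mul_nonneg (mul_nonneg (hM₀ i j) (hu i).le) (hu j).le) (sq_nonneg _)
  simp only [hterm, Finset.sum_sub_distrib, Finset.sum_add_distrib, ← Finset.mul_sum] at hgap
  rw [Finset.sum_comm (f := fun i j => u i * M i j / u j * d j ^ 2), ← Finset.sum_congr rfl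
    fun i _ => hdiag i] at hgap
  simp only [dotProduct, mulVec] at hgap ⊢
  linarith

theorem F3_eq_half_dotProduct {r n : ℕ} (a v : Fin n → ℝ) (H : Matrix (Fin r) (Fin n) ℝ)
    (w : Fin r → ℝ) :
    F3 a v H w = (1 / 2) * ((a - v - w ᵥ* H) ⬝ᵥ (a - v - w ᵥ* H)) := by
  simp only [F3, dotProduct, sq]
  rfl

theorem gradF3_eq_neg_mulVec {r n : ℕ} (a v : Fin n → ℝ) (H : Matrix (Fin r) (Fin n) ℝ)
    (w : Fin r → ℝ) : gradF3 a v H w = -(H *ᵥ (a - v - w ᵥ* H)) := by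
  ext b
  simp only [gradF3, Pi.neg_apply, mulVec, dotProduct, mul_comm (H b _)]
  rfl

theorem F3_eq_taylor {r n : ℕ} (a v : Fin n → ℝ) (H : Matrix (Fin r) (Fin n) ℝ)
    (w w' : Fin r → ℝ) :
    F3 a v H w = F3 a v H w' + (∑ b, (w b - w' b) * gradF3 a v H w' b)
      + (1 / 2) * ((w - w') ⬝ᵥ ((H * Hᵀ) *ᵥ (w - w'))) := by
  set e := a - v - w' ᵥ* H
  set s := (w - w') ᵥ* H
  have hres : a - v - w ᵥ* H = e - s := by
    simp only [e, s, sub_vecMul]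
    abel
  have hgrad : ∑ b, (w b - w' b) * gradF3 a v H w' b = -(s ⬝ᵥ e) := by
    rw [← dotProduct_mulVec, ← dotProduct_neg, ← gradF3_eq_neg_mulVec]
    rfl
  have hhess : (w - w') ⬝ᵥ ((H * Hᵀ) *ᵥ (w - w')) = s ⬝ᵥ s := by
    rw [← mulVec_mulVec, dotProduct_mulVec, ← vecMul_transpose, transpose_transpose]
  have hF' : F3 a v H w' = 1 / 2 * (e ⬝ᵥ e) := F3_eq_half_dotProduct a v H w'
  rw [F3_eq_half_dotProduct, hres, hgrad, hhess, hF']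
  clear_value e s
  rw [sub_dotProduct, dotProduct_sub, dotProduct_sub, dotProduct_comm e s]
  ring

theorem stmt_3_general {r n : ℕ} (a v : Fin n → ℝ) (hv : ∀ c, 0 ≤ v c)
    (H : Matrix (Fin r) (Fin n) ℝ) (hH : ∀ i j, 0 ≤ H i j)
    (wt : Fin r → ℝ) (hwt : ∀ b, 0 < wt b)
    (K : Fin r → ℝ)
    (hK : ∀ b, K b = ((wt ᵥ* (H * Hᵀ)) b + (v ᵥ* Hᵀ) b) / wt b)
    (G : (Fin r → ℝ) → (Fin r → ℝ) → ℝ)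
    (hG : ∀ w w', G w w' = F3 a v H w' + (∑ b, (w b - w' b) * gradF3 a v H w' b)
      + (1 / 2) * ∑ b, K b * (w b - w' b) ^ 2) :
    (∀ w, F3 a v H w ≤ G w wt) ∧ G wt wt = F3 a v H wt := by
  refine ⟨fun w => ?_, by simp [hG]⟩
  have hsymm : (H * Hᵀ).IsSymm := by
    rw [IsSymm, transpose_mul, transpose_transpose]
  have hHHt : ∀ i j, 0 ≤ (H * Hᵀ) i j := fun i j => by
    rw [mul_apply]
    exact Finset.sum_nonneg fun c _ => mul_nonneg (hH i c) (hH j c)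
  have hquad := dotProduct_mulVec_le_sum_vecMul_div (H * Hᵀ) hsymm hHHt wt hwt (w - wt)
  have hK_ge : ∀ b, (wt ᵥ* (H * Hᵀ)) b / wt b * (w - wt) b ^ 2 ≤ K b * (w b - wt b) ^ 2 := by
    intro b
    have hvH : 0 ≤ (v ᵥ* Hᵀ) b := by
      simp only [vecMul_transpose, mulVec, dotProduct]
      exact Finset.sum_nonneg fun c _ => mul_nonneg (hH b c) (hv c)
    rw [hK, Pi.sub_apply]
    gcongr
    · exact (hwt b).le
    · exact le_add_of_nonneg_right hvH
  rw [hG, F3_eq_taylor a v H w wt]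
  linarith [Finset.sum_le_sum fun b (_ : b ∈ Finset.univ) => hK_ge b]

/-- With `K_{aa} = ((wᵗ H Hᵀ)_a + (vᵀ Hᵀ)_a)/wᵗ_a`, the quadratic
`G(w, wᵗ) = F(wᵗ) + (w - wᵗ)·∇F(wᵗ) + (1/2)(w - wᵗ)ᵀ K (w - wᵗ)` is an
auxiliary function for `F`. -/
theorem stmt_3 {r n : ℕ} (a v : Fin n → ℝ) (ha : ∀ c, 0 ≤ a c) (hv : ∀ c, 0 ≤ v c)
    (H : Matrix (Fin r) (Fin n) ℝ) (hH : ∀ i j, 0 ≤ H i j)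
    (wt : Fin r → ℝ) (hwt : ∀ b, 0 < wt b)
    (K : Fin r → ℝ)
    (hK : ∀ b, K b = ((wt ᵥ* (H * Hᵀ)) b + (v ᵥ* Hᵀ) b) / wt b)
    (G : (Fin r → ℝ) → (Fin r → ℝ) → ℝ)
    (hG : ∀ w w', G w w' = F3 a v H w' + (∑ b, (w b - w' b) * gradF3 a v H w' b)
      + (1 / 2) * ∑ b, K b * (w b - w' b) ^ 2) :
    (∀ w, F3 a v H w ≤ G w wt) ∧ G wt wt = F3 a v H wt :=
  stmt_3_general a v hv H hH wt hwt K hK G hG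
end

section
/- The Stratified-NMF objective Σ_{i=1}^s ‖A(i) − 𝟏 v(i)^T − W(i) H‖_F² equals the standard NMF objective ‖Â − Ŵ Ĥ‖_F², where Â is the row-wise stacking of the A(i), Ŵ is the block matrix whose i-th block row is [0 … 0 𝟏_i 0 … 0 W(i)] (with 𝟏_i ∈ ℝ^{m_i} the all-ones vector in the i-th of s column blocks), and Ĥ stacks the rows v(1)^T, …, v(s)^T on top of H. -/
/-!
Each row of `Ŵ` selects its own stratum's `v(i)ᵀ` from the first `s` rows of `Ĥ` (the `𝟏_i`
block is an indicator of the stratum) and applies `W(i)` to `H`, so row `(i, j)` of `Ŵ Ĥ` is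
`v(i)ᵀ + (W(i) H)_j`; summing over the stacked rows is summing over strata and then rows.
-/

open Matrix

variable {s r n : ℕ} {m : Fin s → ℕ}

/-- Row-wise stacking of the strata data matrices `A(i)`. -/
def Ahat (A : ∀ i : Fin s, Matrix (Fin (m i)) (Fin n) ℝ) :
    Matrix ((i : Fin s) × Fin (m i)) (Fin n) ℝ :=
  fun p c => A p.1 p.2 c

/-- Block matrix whose `i`-th block row is `[0 … 0 𝟏_i 0 … 0 W(i)]`. -/
def What (W : ∀ i : Fin s, Matrix (Fin (m i)) (Fin r) ℝ) :
    Matrix ((i : Fin s) × Fin (m i)) (Fin s ⊕ Fin r) ℝ :=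
  fun p j => match j with
    | Sum.inl i => if i = p.1 then 1 else 0
    | Sum.inr k => W p.1 p.2 k

/-- Stacking of the rows `v(1)ᵀ, …, v(s)ᵀ` on top of `H`. -/
def Hhat (v : Fin s → Fin n → ℝ) (H : Matrix (Fin r) (Fin n) ℝ) :
    Matrix (Fin s ⊕ Fin r) (Fin n) ℝ :=
  fun j c => match j with
    | Sum.inl i => v i c
    | Sum.inr k => H k c

theorem What_mul_Hhat_apply (W : ∀ i : Fin s, Matrix (Fin (m i)) (Fin r) ℝ)
    (v : Fin s → Fin n → ℝ) (H : Matrix (Fin r) (Fin n) ℝ) (p : (i : Fin s) × Fin (m i))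
    (c : Fin n) : (What W * Hhat v H) p c = v p.1 c + (W p.1 * H) p.2 c := by
  simp only [mul_apply, Fintype.sum_sum_type, What, Hhat, ite_mul, one_mul, zero_mul,
    Finset.sum_ite_eq', Finset.mem_univ, if_true]

/-- The Stratified-NMF objective equals the standard NMF objective of the
block formulation: `Σ_i ‖A(i) - 𝟏 v(i)ᵀ - W(i) H‖_F² = ‖Â - Ŵ Ĥ‖_F²`. -/
theorem stmt_5 (A : ∀ i : Fin s, Matrix (Fin (m i)) (Fin n) ℝ)
    (v : Fin s → Fin n → ℝ)
    (W : ∀ i : Fin s, Matrix (Fin (m i)) (Fin r) ℝ)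
    (H : Matrix (Fin r) (Fin n) ℝ) :
    ∑ i, ∑ j, ∑ c, (A i j c - v i c - (W i * H) j c) ^ 2
      = ∑ p : (i : Fin s) × Fin (m i), ∑ c,
        (Ahat A p c - (What W * Hhat v H) p c) ^ 2 := by
  rw [Finset.sum_sigma']
  refine Finset.sum_congr rfl fun p _ => Finset.sum_congr rfl fun c _ => ?_
  rw [What_mul_Hhat_apply, Ahat, sub_sub]
end

section
/- The Stratified-NMF objective F(v, W, H) = Σ_{i=1}^s ‖A(i) − 𝟏 v(i)^T − W(i) H‖_F² is non-increasing under the multiplicative update of the strata vectors v(i) ← v(i) ⊙ (A(i)^T 𝟏) ⊘ (m_i v(i) + H^T W(i)^T 𝟏), holding W(i) and H fixed. -/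
open Matrix

/-- The Stratified-NMF objective is non-increasing under the multiplicative
update of the strata vectors `v(i) ← v(i) ⊙ (A(i)ᵀ 𝟏) ⊘ (m_i v(i) + Hᵀ W(i)ᵀ 𝟏)`,
holding `W(i)` and `H` fixed. -/
theorem stmt_9 {s r n : ℕ} {m : Fin s → ℕ}
    (A : ∀ i : Fin s, Matrix (Fin (m i)) (Fin n) ℝ)
    (v : Fin s → Fin n → ℝ)
    (W : ∀ i : Fin s, Matrix (Fin (m i)) (Fin r) ℝ)
    (H : Matrix (Fin r) (Fin n) ℝ)
    (hA : ∀ i j c, 0 ≤ A i j c) (hv : ∀ i c, 0 < v i c)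
    (hW : ∀ i j k, 0 ≤ W i j k) (hH : ∀ k c, 0 ≤ H k c)
    (hden : ∀ i c, 0 < (m i : ℝ) * v i c + ∑ j, (W i * H) j c)
    (v' : Fin s → Fin n → ℝ)
    (hv' : ∀ i c, v' i c = v i c * ((∑ j, A i j c)
        / ((m i : ℝ) * v i c + ∑ j, (W i * H) j c))) :
    ∑ i, ∑ j, ∑ c, (A i j c - v' i c - (W i * H) j c) ^ 2
      ≤ ∑ i, ∑ j, ∑ c, (A i j c - v i c - (W i * H) j c) ^ 2 := by
  apply Finset.sum_le_sum
  intro i _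
  rw [Finset.sum_comm]
  conv_rhs => rw [Finset.sum_comm]
  apply Finset.sum_le_sum
  intro c _
  set M : ℝ := (m i : ℝ) with hM
  set S : ℝ := ∑ j, A i j c with hS
  set P : ℝ := ∑ j, (W i * H) j c with hP
  set vv : ℝ := v i c with hvv
  have hD : 0 < M * vv + P := hden i c
  have hDne : M * vv + P ≠ 0 := ne_of_gt hD
  have hvpos : 0 < vv := hv i c
  have hPnn : 0 ≤ P := by
    apply Finset.sum_nonneg
    intro j _
    simp only [Matrix.mul_apply]
    exact Finset.sum_nonneg fun k _ => mul_nonneg (hW i j k) (hH k c)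
  have expand : ∀ t : ℝ, ∑ j : Fin (m i), (A i j c - t - (W i * H) j c) ^ 2
      = (∑ j : Fin (m i), (A i j c - (W i * H) j c) ^ 2) - 2 * t * (S - P) + M * t ^ 2 := by
    intro t
    have h1 : ∀ j : Fin (m i), (A i j c - t - (W i * H) j c) ^ 2
        = (A i j c - (W i * H) j c) ^ 2 - 2 * t * (A i j c - (W i * H) j c) + t ^ 2 := by
      intro j; ring
    simp_rw [h1]
    rw [Finset.sum_add_distrib, Finset.sum_sub_distrib, ← Finset.mul_sum,
      Finset.sum_sub_distrib, Finset.sum_const, Finset.card_univ, Fintype.card_fin,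
      nsmul_eq_mul]
  rw [expand (v' i c), expand vv]
  have e1 : v' i c = vv * S / (M * vv + P) := by
    rw [hv' i c, mul_div_assoc]
  set t' : ℝ := v' i c with ht'
  have key : 0 ≤ vv * ((M * vv + P) - S) ^ 2 * ((M * vv + P) + P) :=
    mul_nonneg (mul_nonneg hvpos.le (sq_nonneg _)) (by linarith)
  have ident : M * t' ^ 2 - 2 * t' * (S - P) - (M * vv ^ 2 - 2 * vv * (S - P))
      = -(vv * ((M * vv + P) - S) ^ 2 * ((M * vv + P) + P)) / (M * vv + P) ^ 2 := by
    rw [e1]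
    field_simp
    ring
  have hD2 : 0 < (M * vv + P) ^ 2 := by positivity
  have hle : M * t' ^ 2 - 2 * t' * (S - P) - (M * vv ^ 2 - 2 * vv * (S - P)) ≤ 0 := by
    rw [ident]
    apply div_nonpos_of_nonpos_of_nonneg
    · linarith
    · exact hD2.le
  linarith
end

section
/- The Stratified-NMF objective Σ_{i=1}^s ‖A(i) − 𝟏 v(i)^T − W(i) H‖_F² is non-increasing under the multiplicative update W(i) ← W(i) ⊙ (A(i) H^T) ⊘ ((W(i) H + 𝟏 v(i)^T) H^T) applied to all strata simultaneously, holding v(i) and H fixed. -/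
/-! The update acts on each row `w` of each `W(i)` separately. With residual `x = a - v - wH`,
step `d = w' - w` and denominator `D = (wH + v)Hᵀ`,
`‖x - dH‖² = ‖x‖² - 2⟨x, dH⟩ + ‖dH‖²`. The multiplicative rule makes
`⟨x, dH⟩ = Σₖ dₖ² Dₖ / wₖ`, while the weighted Cauchy–Schwarz inequality gives
`‖dH‖² ≤ Σₖ dₖ² (wHHᵀ)ₖ / wₖ ≤ Σₖ dₖ² Dₖ / wₖ`; so the objective drops by at least this
nonnegative sum. -/

open Matrix

/-- The matrix `𝟏 v(i)ᵀ` whose rows all equal `v(i)ᵀ`. -/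
def onesVT {mi n : ℕ} (vi : Fin n → ℝ) : Matrix (Fin mi) (Fin n) ℝ :=
  fun _ c => vi c

section

variable {κ ν : Type*} [Fintype κ] [Fintype ν]

lemma mul_div_sub_self_mul_sub {w D N : ℝ} (hw : w ≠ 0) (hD : D ≠ 0) :
    (w * (N / D) - w) * (N - D) = (w * (N / D) - w) ^ 2 / w * D := by
  field_simp

lemma sum_sq_vecMul_le (H : Matrix κ ν ℝ) (hH : ∀ k c, 0 ≤ H k c) {w : κ → ℝ}
    (hw : ∀ k, 0 < w k) (d : κ → ℝ) :
    ∑ c, (d ᵥ* H) c ^ 2 ≤ ∑ k, d k ^ 2 / w k * (H *ᵥ (w ᵥ* H)) k :=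
  calc ∑ c, (d ᵥ* H) c ^ 2 ≤ ∑ c, (∑ k, d k ^ 2 / w k * H k c) * (w ᵥ* H) c := by
        refine Finset.sum_le_sum fun c _ => ?_
        refine Finset.sum_sq_le_sum_mul_sum_of_sq_le_mul _
          (fun k _ => mul_nonneg (div_nonneg (sq_nonneg _) (hw k).le) (hH k c))
          (fun k _ => mul_nonneg (hw k).le (hH k c)) (fun k _ => le_of_eq ?_)
        field_simp [(hw k).ne']
    _ = ∑ k, d k ^ 2 / w k * (H *ᵥ (w ᵥ* H)) k := by
        simp only [mulVec, dotProduct, Finset.sum_mul, Finset.mul_sum]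
        rw [Finset.sum_comm]
        exact Finset.sum_congr rfl fun k _ => Finset.sum_congr rfl fun c _ => by
          simp only [vecMul, dotProduct]; ring

theorem sum_sq_sub_vecMul_update_le (a e : ν → ℝ) (H : Matrix κ ν ℝ) (hH : ∀ k c, 0 ≤ H k c)
    (he : ∀ c, 0 ≤ e c) {w w' : κ → ℝ} (hw : ∀ k, 0 < w k)
    (hD : ∀ k, 0 < (H *ᵥ (w ᵥ* H + e)) k)
    (hw' : ∀ k, w' k = w k * ((H *ᵥ a) k / (H *ᵥ (w ᵥ* H + e)) k)) :
    ∑ c, (a c - e c - (w' ᵥ* H) c) ^ 2 ≤ ∑ c, (a c - e c - (w ᵥ* H) c) ^ 2 := by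
  set D := H *ᵥ (w ᵥ* H + e)
  set d := w' - w
  set S := ∑ k, d k ^ 2 / w k * D k
  let x := a - e - w ᵥ* H
  have hS : 0 ≤ S := Finset.sum_nonneg fun k _ =>
    mul_nonneg (div_nonneg (sq_nonneg _) (hw k).le) (hD k).le
  have hlin : ∑ c, x c * (d ᵥ* H) c = S := by
    have hHx : H *ᵥ x = H *ᵥ a - D := by
      simp only [x, D, mulVec_sub, mulVec_add]; abel
    have hd : ∀ k, d k * (H *ᵥ x) k = d k ^ 2 / w k * D k := fun k => by
      simp only [hHx, d, Pi.sub_apply, hw' k]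
      exact mul_div_sub_self_mul_sub (hw k).ne' (hD k).ne'
    change x ⬝ᵥ d ᵥ* H = S
    rw [dotProduct_comm, ← dotProduct_mulVec]
    exact Finset.sum_congr rfl fun k _ => hd k
  have hquad : ∑ c, (d ᵥ* H) c ^ 2 ≤ S := by
    refine (sum_sq_vecMul_le H hH hw d).trans (Finset.sum_le_sum fun k _ => ?_)
    have he' : 0 ≤ (H *ᵥ e) k := Finset.sum_nonneg fun c _ => mul_nonneg (hH k c) (he c)
    have hwH : (H *ᵥ (w ᵥ* H)) k ≤ D k := by
      simp only [D, mulVec_add, Pi.add_apply]; linarith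
    exact mul_le_mul_of_nonneg_left hwH (div_nonneg (sq_nonneg _) (hw k).le)
  have hres : ∀ c, a c - e c - (w' ᵥ* H) c = x c - (d ᵥ* H) c := fun c => by
    simp only [x, d, sub_vecMul, Pi.sub_apply]; ring
  calc ∑ c, (a c - e c - (w' ᵥ* H) c) ^ 2
      = ∑ c, x c ^ 2 - 2 * ∑ c, x c * (d ᵥ* H) c + ∑ c, (d ᵥ* H) c ^ 2 := by
        simp only [hres, Finset.mul_sum, ← Finset.sum_sub_distrib, ← Finset.sum_add_distrib]
        exact Finset.sum_congr rfl fun c _ => by ring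
    _ ≤ ∑ c, x c ^ 2 := by linarith

end

theorem sum_sq_sub_onesVT_sub_mul_update_le {m n r : ℕ} (A : Matrix (Fin m) (Fin n) ℝ)
    (v : Fin n → ℝ) (W W' : Matrix (Fin m) (Fin r) ℝ) (H : Matrix (Fin r) (Fin n) ℝ)
    (hv : ∀ c, 0 ≤ v c) (hW : ∀ j k, 0 < W j k) (hH : ∀ k c, 0 ≤ H k c)
    (hden : ∀ j k, 0 < ((W * H + onesVT (mi := m) v) * Hᵀ) j k)
    (hW' : ∀ j k, W' j k = W j k * ((A * Hᵀ) j k / ((W * H + onesVT (mi := m) v) * Hᵀ) j k)) :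
    ∑ j, ∑ c, (A j c - v c - (W' * H) j c) ^ 2
      ≤ ∑ j, ∑ c, (A j c - v c - (W * H) j c) ^ 2 :=
  Finset.sum_le_sum fun j _ => by
    have hrow : ∀ M : Matrix (Fin m) (Fin n) ℝ, (M * Hᵀ) j = H *ᵥ M j := fun M => by
      rw [mul_apply_eq_vecMul, vecMul_transpose]
    have hden_row : ((W * H + onesVT (mi := m) v) * Hᵀ) j = H *ᵥ (W j ᵥ* H + v) := hrow _
    exact sum_sq_sub_vecMul_update_le (A j) v H hH hv (hW j)
      (fun k => hden_row ▸ hden j k)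
      (fun k => by rw [hW' j k, hrow A, hden_row])

theorem stmt_10_general {s r n : ℕ} {m : Fin s → ℕ}
    (A : ∀ i : Fin s, Matrix (Fin (m i)) (Fin n) ℝ)
    (v : Fin s → Fin n → ℝ)
    (W : ∀ i : Fin s, Matrix (Fin (m i)) (Fin r) ℝ)
    (H : Matrix (Fin r) (Fin n) ℝ)
    (hv : ∀ i c, 0 ≤ v i c)
    (hW : ∀ i j k, 0 < W i j k) (hH : ∀ k c, 0 ≤ H k c)
    (hden : ∀ i j k, 0 < ((W i * H + onesVT (mi := m i) (v i)) * Hᵀ) j k)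
    (W' : ∀ i : Fin s, Matrix (Fin (m i)) (Fin r) ℝ)
    (hW' : ∀ i j k, W' i j k = W i j k * ((A i * Hᵀ) j k
        / ((W i * H + onesVT (mi := m i) (v i)) * Hᵀ) j k)) :
    ∑ i, ∑ j, ∑ c, (A i j c - v i c - (W' i * H) j c) ^ 2
      ≤ ∑ i, ∑ j, ∑ c, (A i j c - v i c - (W i * H) j c) ^ 2 :=
  Finset.sum_le_sum fun i _ =>
    sum_sq_sub_onesVT_sub_mul_update_le (A i) (v i) (W i) (W' i) H (hv i) (hW i) hH
      (hden i) (hW' i)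

/-- The Stratified-NMF objective is non-increasing under the multiplicative
update `W(i) ← W(i) ⊙ (A(i) Hᵀ) ⊘ ((W(i) H + 𝟏 v(i)ᵀ) Hᵀ)` applied to all
strata, holding `v(i)` and `H` fixed. -/
theorem stmt_10 {s r n : ℕ} {m : Fin s → ℕ}
    (A : ∀ i : Fin s, Matrix (Fin (m i)) (Fin n) ℝ)
    (v : Fin s → Fin n → ℝ)
    (W : ∀ i : Fin s, Matrix (Fin (m i)) (Fin r) ℝ)
    (H : Matrix (Fin r) (Fin n) ℝ)
    (hA : ∀ i j c, 0 ≤ A i j c) (hv : ∀ i c, 0 ≤ v i c)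
    (hW : ∀ i j k, 0 < W i j k) (hH : ∀ k c, 0 ≤ H k c)
    (hden : ∀ i j k, 0 < ((W i * H + onesVT (mi := m i) (v i)) * Hᵀ) j k)
    (W' : ∀ i : Fin s, Matrix (Fin (m i)) (Fin r) ℝ)
    (hW' : ∀ i j k, W' i j k = W i j k * ((A i * Hᵀ) j k
        / ((W i * H + onesVT (mi := m i) (v i)) * Hᵀ) j k)) :
    ∑ i, ∑ j, ∑ c, (A i j c - v i c - (W' i * H) j c) ^ 2
      ≤ ∑ i, ∑ j, ∑ c, (A i j c - v i c - (W i * H) j c) ^ 2 :=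
  stmt_10_general A v W H hv hW hH hden W' hW'
end
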